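/- Let K be a field, let 0 < k < n, and let a_{k+1}, …, a_n be integers ≥ 1. Let S be the presented commutative monoid ⟨u₁,…,uₙ | u₁⋯u_k = u_{k+1}^{a_{k+1}}⋯u_n^{a_n}⟩, the quotient of (Fin n →₀ ℕ) by the additive congruence generated by the pair (e₁ + ⋯ + e_k, a_{k+1}·e_{k+1} + ⋯ + a_n·e_n), with quotient map π, and let R = AddMonoidAlgebra K S. Fix y ∈ {1,…,k} and z ∈ {k+1,…,n}, let P_{y,z} be the prime ideal of R generated by the monomials X^{π(e_y)} and X^{π(e_z)}, let T be the localization of R at P_{y,z}, and let φ : R → T be the localization map. Then the principal ideal of T generated by φ(X^{π(e_y)}) equals the a_z-th power of the principal ideal of T generated by φ(X^{π(e_z)}); moreover the ideal of T generated by the image φ(P_{y,z}) equals the principal ideal generated by φ(X^{π(e_z)}). -/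

import Mathlib

/-- The word `w₁ = e₁ + ⋯ + e_k` in the free abelian monoid `Fin n →₀ ℕ`. -/
noncomputable def wordOne (n k : ℕ) : Fin n →₀ ℕ :=
  Finsupp.equivFunOnFinite.symm fun i => if i.val < k then 1 else 0

/-- The word `w₂ = a_{k+1}·e_{k+1} + ⋯ + a_n·e_n` in the free abelian monoid `Fin n →₀ ℕ`. -/
noncomputable def wordTwo (n k : ℕ) (a : Fin n → ℕ) : Fin n →₀ ℕ :=
  Finsupp.equivFunOnFinite.symm fun i => if k ≤ i.val then a i else 0

/-!
Write `u_i = X^{π(e_i)}`. The defining relation reads `u_y · u = u_z ^ a_z · v`, where `u` and `v`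
are the monomials of the remaining generators. The additive weight giving `e_y` weight `a_z`, `e_z`
weight `1` and every other generator weight `0` respects the relation, so it descends to `S`.
Every monomial in `P_{y,z}` has positive weight while `u` and `v` have weight `0`; hence `u, v ∉ P`
become units in the localization, which turns the relation into `(u_y) = (u_z)^{a_z}`. As `a_z ≥ 1`,
this puts `u_y` in `(u_z)`, so `P_{y,z}` localizes to `(u_z)`.
-/

open AddMonoidAlgebra

theorem Ideal.map_span_pair_eq_span_singleton {R T : Type*} [CommSemiring R] [CommSemiring T]
    (f : R →+* T) {x y : R} (h : f x ∈ Ideal.span {f y}) :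
    Ideal.map f (Ideal.span {x, y}) = Ideal.span {f y} := by
  rw [Ideal.map_span, Set.image_pair, Ideal.span_insert, sup_eq_right, Ideal.span_le,
    Set.singleton_subset_iff]
  exact h

theorem IsLocalization.AtPrime.span_singleton_eq_pow_of_mul_eq {R : Type*} [CommSemiring R]
    (P : Ideal R) [P.IsPrime] (T : Type*) [CommSemiring T] [Algebra R T]
    [IsLocalization.AtPrime T P] {x y u v : R} {m : ℕ} (hu : u ∉ P) (hv : v ∉ P)
    (h : x * u = y ^ m * v) :
    Ideal.span {algebraMap R T x} = Ideal.span {algebraMap R T y} ^ m := by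
  have hu' := (IsLocalization.AtPrime.isUnit_to_map_iff T P u).mpr hu
  have hv' := (IsLocalization.AtPrime.isUnit_to_map_iff T P v).mpr hv
  rw [← Ideal.span_singleton_mul_right_unit hu', ← map_mul, h, map_mul,
    Ideal.span_singleton_mul_right_unit hv', map_pow, Ideal.span_singleton_pow]

namespace AddMonoidAlgebra

theorem of'_notMem_span_of'_image {K S : Type*} [Semiring K] [Nontrivial K] [AddMonoid S]
    (g : S →+ ℕ) {A : Set S} (hA : ∀ t ∈ A, 0 < g t) {s : S} (hs : g s = 0) :
    of' K S s ∉ Ideal.span (of' K S '' A) := by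
  rw [mem_ideal_span_of'_image]
  intro h
  obtain ⟨t, ht, d, rfl⟩ := h s (by simp [of'_apply])
  have := hA t ht
  rw [map_add] at hs
  omega

variable {K S : Type*} [CommSemiring K] [Nontrivial K] [AddCommMonoid S]

theorem span_algebraMap_of'_eq_pow_of_add_eq (g : S →+ ℕ) {s t s' t' : S} {m : ℕ}
    (hs : 0 < g s) (ht : 0 < g t) (hs' : g s' = 0) (ht' : g t' = 0)
    (hrel : s + s' = m • t + t') (P : Ideal (AddMonoidAlgebra K S))
    (hP : P = Ideal.span {of' K S s, of' K S t}) [P.IsPrime] :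
    Ideal.span {algebraMap _ (Localization.AtPrime P) (of' K S s)} =
      Ideal.span {algebraMap _ (Localization.AtPrime P) (of' K S t)} ^ m := by
  have hP' : P = Ideal.span (of' K S '' {s, t}) := by rw [hP, Set.image_pair]
  have hpos : ∀ r ∈ ({s, t} : Set S), 0 < g r := by rintro r (rfl | rfl) <;> assumption
  refine IsLocalization.AtPrime.span_singleton_eq_pow_of_mul_eq P _
    (hP' ▸ of'_notMem_span_of'_image g hpos hs') (hP' ▸ of'_notMem_span_of'_image g hpos ht') ?_
  simp only [of'_apply, single_mul_single, single_pow, one_pow, mul_one, hrel]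

end AddMonoidAlgebra

section Presentation

variable {n k : ℕ} {a : Fin n → ℕ} {y z : Fin n}

@[simp]
theorem wordOne_apply (i : Fin n) : wordOne n k i = if i.val < k then 1 else 0 := rfl

@[simp]
theorem wordTwo_apply (i : Fin n) : wordTwo n k a i = if k ≤ i.val then a i else 0 := rfl

theorem single_add_erase_wordOne (hy : y.val < k) :
    Finsupp.single y 1 + (wordOne n k).erase y = wordOne n k := by
  simpa [hy] using Finsupp.single_add_erase y (wordOne n k)

theorem nsmul_single_add_erase_wordTwo (hz : k ≤ z.val) :
    a z • Finsupp.single z 1 + (wordTwo n k a).erase z = wordTwo n k a := by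
  simpa [hz] using Finsupp.single_add_erase z (wordTwo n k a)

noncomputable def yzWeight (a : Fin n → ℕ) (y z : Fin n) : (Fin n →₀ ℕ) →+ ℕ :=
  a z • Finsupp.applyAddHom y + Finsupp.applyAddHom z

@[simp]
theorem yzWeight_apply (x : Fin n →₀ ℕ) : yzWeight a y z x = a z * x y + x z := rfl

theorem yzWeight_erase_wordOne (hy : y.val < k) (hz : k ≤ z.val) :
    yzWeight a y z ((wordOne n k).erase y) = 0 := by
  simp [Finsupp.erase_ne (show z ≠ y by omega), hz]

theorem yzWeight_erase_wordTwo (hy : y.val < k) (hz : k ≤ z.val) :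
    yzWeight a y z ((wordTwo n k a).erase z) = 0 := by
  simp [Finsupp.erase_ne (show y ≠ z by omega), hy]

theorem addConGen_le_ker_yzWeight (hy : y.val < k) (hz : k ≤ z.val) :
    addConGen (fun x x' => x = wordOne n k ∧ x' = wordTwo n k a) ≤ AddCon.ker (yzWeight a y z) := by
  rw [AddCon.addConGen_le]
  rintro _ _ ⟨rfl, rfl⟩
  rw [AddCon.ker_rel, ← single_add_erase_wordOne hy, ← nsmul_single_add_erase_wordTwo hz,
    map_add, map_add, yzWeight_erase_wordOne hy hz, yzWeight_erase_wordTwo hy hz]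
  simp [show y ≠ z by omega]

end Presentation

theorem stmt5_general (K : Type*) [Field K] (n k : ℕ)
    (a : Fin n → ℕ) (ha : ∀ i : Fin n, k ≤ i.val → 1 ≤ a i)
    (c : AddCon (Fin n →₀ ℕ))
    (hc : c = addConGen (fun x y => x = wordOne n k ∧ y = wordTwo n k a))
    (y z : Fin n) (hy : y.val < k) (hz : k ≤ z.val)
    (P : Ideal (AddMonoidAlgebra K c.Quotient))
    (hP : P = Ideal.span
      {AddMonoidAlgebra.of' K c.Quotient (c.mk' (Finsupp.single y 1)),
       AddMonoidAlgebra.of' K c.Quotient (c.mk' (Finsupp.single z 1))})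
    [hprime : P.IsPrime] :
    Ideal.span {algebraMap (AddMonoidAlgebra K c.Quotient) (Localization.AtPrime P)
        (AddMonoidAlgebra.of' K c.Quotient (c.mk' (Finsupp.single y 1)))} =
      (Ideal.span {algebraMap (AddMonoidAlgebra K c.Quotient) (Localization.AtPrime P)
        (AddMonoidAlgebra.of' K c.Quotient (c.mk' (Finsupp.single z 1)))}) ^ (a z) ∧
    Ideal.map (algebraMap (AddMonoidAlgebra K c.Quotient) (Localization.AtPrime P)) P =
      Ideal.span {algebraMap (AddMonoidAlgebra K c.Quotient) (Localization.AtPrime P)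
        (AddMonoidAlgebra.of' K c.Quotient (c.mk' (Finsupp.single z 1)))} := by
  have haz : 0 < a z := ha z hz
  have hle : c ≤ AddCon.ker (yzWeight a y z) := hc ▸ addConGen_le_ker_yzWeight hy hz
  have hrel : c.mk' (Finsupp.single y 1) + c.mk' ((wordOne n k).erase y) =
      a z • c.mk' (Finsupp.single z 1) + c.mk' ((wordTwo n k a).erase z) := by
    rw [← map_add, ← map_nsmul, ← map_add, single_add_erase_wordOne hy,
      nsmul_single_add_erase_wordTwo hz, AddCon.coe_mk', c.eq, hc]
    exact AddConGen.Rel.of _ _ ⟨rfl, rfl⟩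
  have hspan := span_algebraMap_of'_eq_pow_of_add_eq (c.lift _ hle)
    (by simpa [show z ≠ y by omega] using haz) (by simp)
    (by rw [AddCon.lift_mk', yzWeight_erase_wordOne hy hz])
    (by rw [AddCon.lift_mk', yzWeight_erase_wordTwo hy hz]) hrel P hP
  have hmap := Ideal.map_span_pair_eq_span_singleton (algebraMap _ (Localization.AtPrime P))
    (Ideal.pow_le_self haz.ne' (hspan ▸ Ideal.mem_span_singleton_self _))
  rw [← hP] at hmap
  exact ⟨hspan, hmap⟩

theorem stmt5 (K : Type*) [Field K] (n k : ℕ) (hk : 0 < k) (hkn : k < n)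
    (a : Fin n → ℕ) (ha : ∀ i : Fin n, k ≤ i.val → 1 ≤ a i)
    (c : AddCon (Fin n →₀ ℕ))
    (hc : c = addConGen (fun x y => x = wordOne n k ∧ y = wordTwo n k a))
    (y z : Fin n) (hy : y.val < k) (hz : k ≤ z.val)
    (P : Ideal (AddMonoidAlgebra K c.Quotient))
    (hP : P = Ideal.span
      {AddMonoidAlgebra.of' K c.Quotient (c.mk' (Finsupp.single y 1)),
       AddMonoidAlgebra.of' K c.Quotient (c.mk' (Finsupp.single z 1))})
    [hprime : P.IsPrime] :
    Ideal.span {algebraMap (AddMonoidAlgebra K c.Quotient) (Localization.AtPrime P)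
        (AddMonoidAlgebra.of' K c.Quotient (c.mk' (Finsupp.single y 1)))} =
      (Ideal.span {algebraMap (AddMonoidAlgebra K c.Quotient) (Localization.AtPrime P)
        (AddMonoidAlgebra.of' K c.Quotient (c.mk' (Finsupp.single z 1)))}) ^ (a z) ∧
    Ideal.map (algebraMap (AddMonoidAlgebra K c.Quotient) (Localization.AtPrime P)) P =
      Ideal.span {algebraMap (AddMonoidAlgebra K c.Quotient) (Localization.AtPrime P)
        (AddMonoidAlgebra.of' K c.Quotient (c.mk' (Finsupp.single z 1)))} :=
  stmt5_general K n k a ha c hc y z hy hz P hP (hprime := hprime)
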